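/- If a tromino-like chiral molecule R(n) = ([0,1]×[0,3] ∪ [1,2]×[2,3]) + n belongs to a family of pairwise essentially disjoint translated molecules (each a translate of R or of its mirror S = ([-1,0]×[0,3] ∪ [-2,-1]×[2,3]) by an integer vector) whose union covers a square Q, and the translate R(n+(1,-1)) is contained in Q, then R(n+(1,-1)) also belongs to the family. -/
import Mathlib


open MeasureTheory Set Filter
open scoped ENNReal

noncomputable section

/-- The basic R-shaped chiral molecule. -/
def Rbase : Set (ℝ × ℝ) := (Icc (0:ℝ) 1 ×ˢ Icc (0:ℝ) 3) ∪ (Icc (1:ℝ) 2 ×ˢ Icc (2:ℝ) 3)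

/-- The basic S-shaped (mirror) chiral molecule. -/
def Sbase : Set (ℝ × ℝ) := (Icc (-1:ℝ) 0 ×ˢ Icc (0:ℝ) 3) ∪ (Icc (-2:ℝ) (-1) ×ˢ Icc (2:ℝ) 3)

/-- Translation of a subset of the plane by a vector. -/
def trSet (v : ℝ × ℝ) (A : Set (ℝ × ℝ)) : Set (ℝ × ℝ) :=
  (fun x => (v.1 + x.1, v.2 + x.2)) '' A

/-- Integer translate of the R molecule. -/
def Rmol (n : ℤ × ℤ) : Set (ℝ × ℝ) := trSet ((n.1 : ℝ), (n.2 : ℝ)) Rbase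

/-- Integer translate of the S molecule. -/
def Smol (n : ℤ × ℤ) : Set (ℝ × ℝ) := trSet ((n.1 : ℝ), (n.2 : ℝ)) Sbase

/-- A set is a molecule if it is an integer translate of R or of S. -/
def IsMolecule (E : Set (ℝ × ℝ)) : Prop := ∃ n : ℤ × ℤ, E = Rmol n ∨ E = Smol n

/-- A chiral family: molecules with pairwise Lebesgue-null intersections. -/
def ChiralFamily (F : Set (Set (ℝ × ℝ))) : Prop :=
  (∀ E ∈ F, IsMolecule E) ∧ ∀ E ∈ F, ∀ E' ∈ F, E ≠ E' → volume (E ∩ E') = 0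

/-- The eight modulated phases `𝒵_i`, `i = 1, ..., 8`. -/
def Zphase (i : ℕ) : Set (Set (ℝ × ℝ)) :=
  if i ≤ 4 then {E | ∃ n : ℤ × ℤ, E = Rmol n ∧ (n.2 + n.1) % 4 = (i : ℤ) % 4}
  else {E | ∃ n : ℤ × ℤ, E = Smol n ∧ (n.2 - n.1) % 4 = ((i : ℤ) - 4) % 4}

/-- Open axis-parallel square of side `r` centered at `x`. -/
def osq (r : ℝ) (x : ℝ × ℝ) : Set (ℝ × ℝ) :=
  Ioo (x.1 - r / 2) (x.1 + r / 2) ×ˢ Ioo (x.2 - r / 2) (x.2 + r / 2)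

/-- Euclidean norm on the plane. -/
def enr (x : ℝ × ℝ) : ℝ := Real.sqrt (x.1 ^ 2 + x.2 ^ 2)

/-- A unit grid cell. -/
def cell (i j : ℤ) : Set (ℝ × ℝ) := Icc (i:ℝ) (i+1) ×ˢ Icc (j:ℝ) (j+1)

/-- Center of a unit grid cell. -/
def ctr (i j : ℤ) : ℝ × ℝ := ((i:ℝ)+1/2, (j:ℝ)+1/2)

lemma mem_trSet (v : ℝ × ℝ) (A : Set (ℝ × ℝ)) (p : ℝ × ℝ) :
    p ∈ trSet v A ↔ (p.1 - v.1, p.2 - v.2) ∈ A := by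
  constructor
  · rintro ⟨q, hq, rfl⟩; simpa using hq
  · intro h; exact ⟨_, h, by simp⟩

lemma memR (u v : ℤ) (p : ℝ × ℝ) :
    p ∈ Rmol (u, v) ↔
      ((u:ℝ) ≤ p.1 ∧ p.1 ≤ u+1 ∧ (v:ℝ) ≤ p.2 ∧ p.2 ≤ v+3) ∨
      ((u:ℝ)+1 ≤ p.1 ∧ p.1 ≤ u+2 ∧ (v:ℝ)+2 ≤ p.2 ∧ p.2 ≤ v+3) := by
  rw [Rmol, mem_trSet]
  simp only [Rbase, mem_union, mem_prod, mem_Icc]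
  constructor
  · rintro (⟨⟨h1,h2⟩,h3,h4⟩|⟨⟨h1,h2⟩,h3,h4⟩)
    · exact Or.inl ⟨by linarith, by linarith, by linarith, by linarith⟩
    · exact Or.inr ⟨by linarith, by linarith, by linarith, by linarith⟩
  · rintro (⟨h1,h2,h3,h4⟩|⟨h1,h2,h3,h4⟩)
    · exact Or.inl ⟨⟨by linarith, by linarith⟩, by linarith, by linarith⟩
    · exact Or.inr ⟨⟨by linarith, by linarith⟩, by linarith, by linarith⟩

lemma memS (u v : ℤ) (p : ℝ × ℝ) :
    p ∈ Smol (u, v) ↔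
      ((u:ℝ)-1 ≤ p.1 ∧ p.1 ≤ u ∧ (v:ℝ) ≤ p.2 ∧ p.2 ≤ v+3) ∨
      ((u:ℝ)-2 ≤ p.1 ∧ p.1 ≤ u-1 ∧ (v:ℝ)+2 ≤ p.2 ∧ p.2 ≤ v+3) := by
  rw [Smol, mem_trSet]
  simp only [Sbase, mem_union, mem_prod, mem_Icc]
  constructor
  · rintro (⟨⟨h1,h2⟩,h3,h4⟩|⟨⟨h1,h2⟩,h3,h4⟩)
    · exact Or.inl ⟨by linarith, by linarith, by linarith, by linarith⟩
    · exact Or.inr ⟨by linarith, by linarith, by linarith, by linarith⟩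
  · rintro (⟨h1,h2,h3,h4⟩|⟨h1,h2,h3,h4⟩)
    · exact Or.inl ⟨⟨by linarith, by linarith⟩, by linarith, by linarith⟩
    · exact Or.inr ⟨⟨by linarith, by linarith⟩, by linarith, by linarith⟩

lemma locR (u v i j : ℤ) (h : ctr i j ∈ Rmol (u, v)) :
    (u = i ∧ (v = j ∨ v = j-1 ∨ v = j-2)) ∨ (u = i-1 ∧ v = j-2) := by
  rw [memR] at h
  simp only [ctr] at h
  rcases h with ⟨h1,h2,h3,h4⟩|⟨h1,h2,h3,h4⟩
  · have e1 : u < i + 1 := by exact_mod_cast (show (u:ℝ) < (i:ℝ)+1 by linarith)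
    have e2 : i < u + 1 := by exact_mod_cast (show (i:ℝ) < (u:ℝ)+1 by linarith)
    have e3 : v < j + 1 := by exact_mod_cast (show (v:ℝ) < (j:ℝ)+1 by linarith)
    have e4 : j < v + 3 := by exact_mod_cast (show (j:ℝ) < (v:ℝ)+3 by linarith)
    omega
  · have e1 : u + 1 < i + 1 := by exact_mod_cast (show (u:ℝ)+1 < (i:ℝ)+1 by linarith)
    have e2 : i < u + 2 := by exact_mod_cast (show (i:ℝ) < (u:ℝ)+2 by linarith)
    have e3 : v + 2 < j + 1 := by exact_mod_cast (show (v:ℝ)+2 < (j:ℝ)+1 by linarith)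
    have e4 : j < v + 3 := by exact_mod_cast (show (j:ℝ) < (v:ℝ)+3 by linarith)
    omega

lemma locS (u v i j : ℤ) (h : ctr i j ∈ Smol (u, v)) :
    (u = i+1 ∧ (v = j ∨ v = j-1 ∨ v = j-2)) ∨ (u = i+2 ∧ v = j-2) := by
  rw [memS] at h
  simp only [ctr] at h
  rcases h with ⟨h1,h2,h3,h4⟩|⟨h1,h2,h3,h4⟩
  · have e1 : u - 1 < i + 1 := by exact_mod_cast (show (u:ℝ)-1 < (i:ℝ)+1 by linarith)
    have e2 : i < u := by exact_mod_cast (show (i:ℝ) < (u:ℝ) by linarith)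
    have e3 : v < j + 1 := by exact_mod_cast (show (v:ℝ) < (j:ℝ)+1 by linarith)
    have e4 : j < v + 3 := by exact_mod_cast (show (j:ℝ) < (v:ℝ)+3 by linarith)
    omega
  · have e1 : u - 2 < i + 1 := by exact_mod_cast (show (u:ℝ)-2 < (i:ℝ)+1 by linarith)
    have e2 : i < u - 1 := by exact_mod_cast (show (i:ℝ) < (u:ℝ)-1 by linarith)
    have e3 : v + 2 < j + 1 := by exact_mod_cast (show (v:ℝ)+2 < (j:ℝ)+1 by linarith)
    have e4 : j < v + 3 := by exact_mod_cast (show (j:ℝ) < (v:ℝ)+3 by linarith)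
    omega

lemma cell_subR (u v i j : ℤ)
    (h : (i = u ∧ (j = v ∨ j = v+1 ∨ j = v+2)) ∨ (i = u+1 ∧ j = v+2)) :
    cell i j ⊆ Rmol (u, v) := by
  rintro ⟨x, y⟩ ⟨⟨hx1, hx2⟩, ⟨hy1, hy2⟩⟩
  rw [memR]
  simp only at hx1 hx2 hy1 hy2
  rcases h with ⟨h1, h2 | h2 | h2⟩ | ⟨h1, h2⟩ <;> subst h1 <;> subst h2 <;>
    [ (exact Or.inl ⟨by push_cast at *; linarith, by push_cast at *; linarith,
        by push_cast at *; linarith, by push_cast at *; linarith⟩);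
      (exact Or.inl ⟨by push_cast at *; linarith, by push_cast at *; linarith,
        by push_cast at *; linarith, by push_cast at *; linarith⟩);
      (exact Or.inl ⟨by push_cast at *; linarith, by push_cast at *; linarith,
        by push_cast at *; linarith, by push_cast at *; linarith⟩);
      (exact Or.inr ⟨by push_cast at *; linarith, by push_cast at *; linarith,
        by push_cast at *; linarith, by push_cast at *; linarith⟩)]

lemma cell_subS (u v i j : ℤ)
    (h : (i = u-1 ∧ (j = v ∨ j = v+1 ∨ j = v+2)) ∨ (i = u-2 ∧ j = v+2)) :
    cell i j ⊆ Smol (u, v) := by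
  rintro ⟨x, y⟩ ⟨⟨hx1, hx2⟩, ⟨hy1, hy2⟩⟩
  rw [memS]
  simp only at hx1 hx2 hy1 hy2
  rcases h with ⟨h1, h2 | h2 | h2⟩ | ⟨h1, h2⟩ <;> subst h1 <;> subst h2 <;>
    [ (exact Or.inl ⟨by push_cast at *; linarith, by push_cast at *; linarith,
        by push_cast at *; linarith, by push_cast at *; linarith⟩);
      (exact Or.inl ⟨by push_cast at *; linarith, by push_cast at *; linarith,
        by push_cast at *; linarith, by push_cast at *; linarith⟩);
      (exact Or.inl ⟨by push_cast at *; linarith, by push_cast at *; linarith,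
        by push_cast at *; linarith, by push_cast at *; linarith⟩);
      (exact Or.inr ⟨by push_cast at *; linarith, by push_cast at *; linarith,
        by push_cast at *; linarith, by push_cast at *; linarith⟩)]

lemma ctr_mem (i j : ℤ) : ctr i j ∈ cell i j := by
  constructor <;> constructor <;> simp [ctr] <;> norm_num

lemma cell_vol (i j : ℤ) : volume (cell i j) = 1 := by
  rw [cell, Measure.volume_eq_prod, Measure.prod_prod, Real.volume_Icc, Real.volume_Icc]
  norm_num

lemma clash {F : Set (Set (ℝ × ℝ))} (hF : ChiralFamily F) {A B : Set (ℝ × ℝ)}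
    (hA : A ∈ F) (hB : B ∈ F) (i j : ℤ) (h1 : cell i j ⊆ A) (h2 : cell i j ⊆ B) :
    A = B := by
  by_contra hne
  have h0 := hF.2 A hA B hB hne
  have hle : volume (cell i j) ≤ volume (A ∩ B) :=
    measure_mono (subset_inter h1 h2)
  rw [cell_vol, h0] at hle
  simp at hle

/-- If `R(n)` belongs to a chiral family covering a square `Q` with
integer corners, and `R(n + (1,-1)) ⊆ Q`, then `R(n + (1,-1))` also belongs to the family. -/
theorem stmt0 (F : Set (Set (ℝ × ℝ))) (hF : ChiralFamily F)
    (a b c d : ℤ)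
    (hcov : (Ioo (a : ℝ) b ×ˢ Ioo (c : ℝ) d) ⊆ ⋃₀ F)
    (hab : (b : ℝ) - a = d - c)  -- Q is a square
    (n : ℤ × ℤ) (hn : Rmol n ∈ F)
    (hsub : Rmol (n.1 + 1, n.2 - 1) ⊆ Ioo (a : ℝ) b ×ˢ Ioo (c : ℝ) d) :
    Rmol (n.1 + 1, n.2 - 1) ∈ F := by
  obtain ⟨n1, n2⟩ := n
  show Rmol (n1 + 1, n2 - 1) ∈ F
  have hn' : Rmol (n1, n2) ∈ F := hn
  have hsub' : Rmol (n1 + 1, n2 - 1) ⊆ Ioo (a : ℝ) b ×ˢ Ioo (c : ℝ) d := hsub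
  -- the two key cells of the target molecule
  have hc1 : cell (n1+1) n2 ⊆ Rmol (n1+1, n2-1) := cell_subR _ _ _ _ (by omega)
  have hc2 : cell (n1+1) (n2+1) ⊆ Rmol (n1+1, n2-1) := cell_subR _ _ _ _ (by omega)
  -- the centers are covered by the family
  obtain ⟨E2, hE2F, hp2⟩ := hcov (hsub' (hc2 (ctr_mem _ _)))
  obtain ⟨m2, hm2 | hm2⟩ := hF.1 E2 hE2F
  · -- E2 is an R-molecule
    obtain ⟨u, v⟩ := m2
    subst hm2
    rcases locR u v (n1+1) (n2+1) hp2 with ⟨hu, hv | hv | hv⟩ | ⟨hu, hv⟩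
    · -- (n1+1, n2+1): overlaps R(n) in cell (n1+1, n2+2)
      have heq : Rmol (u, v) = Rmol (n1, n2) := clash hF hE2F hn' (n1+1) (n2+2)
        (cell_subR _ _ _ _ (by omega)) (cell_subR _ _ _ _ (by omega))
      rw [heq] at hp2
      exact absurd (locR n1 n2 (n1+1) (n2+1) hp2) (by omega)
    · -- (n1+1, n2): overlaps R(n) in cell (n1+1, n2+2)
      have heq : Rmol (u, v) = Rmol (n1, n2) := clash hF hE2F hn' (n1+1) (n2+2)
        (cell_subR _ _ _ _ (by omega)) (cell_subR _ _ _ _ (by omega))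
      rw [heq] at hp2
      exact absurd (locR n1 n2 (n1+1) (n2+1) hp2) (by omega)
    · -- (n1+1, n2-1): this is the target
      have : u = n1 + 1 := by omega
      subst this
      have : v = n2 - 1 := by omega
      subst this
      exact hE2F
    · -- (n1, n2-1): overlaps R(n) in cell (n1, n2)
      have heq : Rmol (u, v) = Rmol (n1, n2) := clash hF hE2F hn' n1 n2
        (cell_subR _ _ _ _ (by omega)) (cell_subR _ _ _ _ (by omega))
      rw [heq] at hp2
      exact absurd (locR n1 n2 (n1+1) (n2+1) hp2) (by omega)
  · -- E2 is an S-molecule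
    obtain ⟨u, v⟩ := m2
    subst hm2
    rcases locS u v (n1+1) (n2+1) hp2 with ⟨hu, hv | hv | hv⟩ | ⟨hu, hv⟩
    · -- (n1+2, n2+1): overlaps R(n) in cell (n1+1, n2+2)
      have heq : Smol (u, v) = Rmol (n1, n2) := clash hF hE2F hn' (n1+1) (n2+2)
        (cell_subS _ _ _ _ (by omega)) (cell_subR _ _ _ _ (by omega))
      rw [heq] at hp2
      exact absurd (locR n1 n2 (n1+1) (n2+1) hp2) (by omega)
    · -- (n1+2, n2): overlaps R(n) in cell (n1+1, n2+2)
      have heq : Smol (u, v) = Rmol (n1, n2) := clash hF hE2F hn' (n1+1) (n2+2)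
        (cell_subS _ _ _ _ (by omega)) (cell_subR _ _ _ _ (by omega))
      rw [heq] at hp2
      exact absurd (locR n1 n2 (n1+1) (n2+1) hp2) (by omega)
    · -- (n1+2, n2-1): overlaps R(n) in cell (n1, n2+1)
      have heq : Smol (u, v) = Rmol (n1, n2) := clash hF hE2F hn' n1 (n2+1)
        (cell_subS _ _ _ _ (by omega)) (cell_subR _ _ _ _ (by omega))
      rw [heq] at hp2
      exact absurd (locR n1 n2 (n1+1) (n2+1) hp2) (by omega)
    · -- the bad case: S0 = Smol (n1+3, n2-1) ∈ F
      have hu3 : u = n1 + 3 := by omega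
      have hv3 : v = n2 - 1 := by omega
      subst hu3; subst hv3
      have hS0 : Smol (n1+3, n2-1) ∈ F := hE2F
      exfalso
      -- look at the cell (n1+1, n2)
      obtain ⟨E1, hE1F, hp1⟩ := hcov (hsub' (hc1 (ctr_mem _ _)))
      obtain ⟨m1, hm1 | hm1⟩ := hF.1 E1 hE1F
      · obtain ⟨u', v'⟩ := m1
        subst hm1
        rcases locR u' v' (n1+1) n2 hp1 with ⟨hu', hv' | hv' | hv'⟩ | ⟨hu', hv'⟩
        · -- (n1+1, n2): overlaps R(n) in cell (n1+1, n2+2)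
          have heq : Rmol (u', v') = Rmol (n1, n2) := clash hF hE1F hn' (n1+1) (n2+2)
            (cell_subR _ _ _ _ (by omega)) (cell_subR _ _ _ _ (by omega))
          rw [heq] at hp1
          exact absurd (locR n1 n2 (n1+1) n2 hp1) (by omega)
        · -- (n1+1, n2-1): overlaps S0 in cell (n1+2, n2+1)
          have heq : Rmol (u', v') = Smol (n1+3, n2-1) := clash hF hE1F hS0 (n1+2) (n2+1)
            (cell_subR _ _ _ _ (by omega)) (cell_subS _ _ _ _ (by omega))
          rw [heq] at hp1
          exact absurd (locS (n1+3) (n2-1) (n1+1) n2 hp1) (by omega)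
        · -- (n1+1, n2-2): overlaps S0 in cell (n1+2, n2)
          have heq : Rmol (u', v') = Smol (n1+3, n2-1) := clash hF hE1F hS0 (n1+2) n2
            (cell_subR _ _ _ _ (by omega)) (cell_subS _ _ _ _ (by omega))
          rw [heq] at hp1
          exact absurd (locS (n1+3) (n2-1) (n1+1) n2 hp1) (by omega)
        · -- (n1, n2-2): overlaps R(n) in cell (n1, n2)
          have heq : Rmol (u', v') = Rmol (n1, n2) := clash hF hE1F hn' n1 n2
            (cell_subR _ _ _ _ (by omega)) (cell_subR _ _ _ _ (by omega))
          rw [heq] at hp1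
          exact absurd (locR n1 n2 (n1+1) n2 hp1) (by omega)
      · obtain ⟨u', v'⟩ := m1
        subst hm1
        rcases locS u' v' (n1+1) n2 hp1 with ⟨hu', hv' | hv' | hv'⟩ | ⟨hu', hv'⟩
        · -- (n1+2, n2): overlaps R(n) in cell (n1+1, n2+2)
          have heq : Smol (u', v') = Rmol (n1, n2) := clash hF hE1F hn' (n1+1) (n2+2)
            (cell_subS _ _ _ _ (by omega)) (cell_subR _ _ _ _ (by omega))
          rw [heq] at hp1
          exact absurd (locR n1 n2 (n1+1) n2 hp1) (by omega)
        · -- (n1+2, n2-1): overlaps R(n) in cell (n1, n2+1)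
          have heq : Smol (u', v') = Rmol (n1, n2) := clash hF hE1F hn' n1 (n2+1)
            (cell_subS _ _ _ _ (by omega)) (cell_subR _ _ _ _ (by omega))
          rw [heq] at hp1
          exact absurd (locR n1 n2 (n1+1) n2 hp1) (by omega)
        · -- (n1+2, n2-2): overlaps R(n) in cell (n1, n2)
          have heq : Smol (u', v') = Rmol (n1, n2) := clash hF hE1F hn' n1 n2
            (cell_subS _ _ _ _ (by omega)) (cell_subR _ _ _ _ (by omega))
          rw [heq] at hp1
          exact absurd (locR n1 n2 (n1+1) n2 hp1) (by omega)
        · -- (n1+3, n2-2): overlaps S0 in cell (n1+2, n2)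
          have heq : Smol (u', v') = Smol (n1+3, n2-1) := clash hF hE1F hS0 (n1+2) n2
            (cell_subS _ _ _ _ (by omega)) (cell_subS _ _ _ _ (by omega))
          rw [heq] at hp1
          exact absurd (locS (n1+3) (n2-1) (n1+1) n2 hp1) (by omega)
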